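/- Let $f,g$ be rearranged (radially symmetric nonincreasing) integrable functions on $\mathbb{R}^N$ with $f\prec g$, i.e. $\int_{B_R} f \le \int_{B_R} g$ for all $R>0$. Then $\|f\|_{L^p(\mathbb{R}^N)} \le \|g\|_{L^p(\mathbb{R}^N)}$ for every $p\in[1,\infty]$. -/

import Mathlib

open MeasureTheory Metric Set Filter Topology intervalIntegral
open scoped ENNReal

/-! For radially nonincreasing `f`, the superlevel set `{f > t}` agrees a.e. with a ball `B_ρ`,
on which `f - t ≥ 0`; hence for every `t > 0`
`∫ (f - t)₊ = ∫_{B_ρ} (f - t) ≤ ∫_{B_ρ} (g - t) ≤ ∫ (g - t)₊`,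
where `(f - t)₊` is `ENNReal.ofReal (f x - t)`. These inequalities control every `L^p` norm:
for `1 < p < ∞` through `s ^ p = p (p - 1) ∫₀^∞ (s - t)₊ t ^ (p - 2) dt`, for `p = 1` by letting
`t → 0`, and for `p = ∞` by taking `t` above `‖g‖_∞`. -/

theorem integral_sub_mul_rpow {s q : ℝ} (hs : 0 ≤ s) (hq : 1 < q) :
    ∫ t in Ioc 0 s, (s - t) * t ^ (q - 2) = s ^ q / (q * (q - 1)) := by
  have hsplit : ∀ t ∈ Ioc (0 : ℝ) s,
      (s - t) * t ^ (q - 2) = s * t ^ (q - 2) - t ^ (q - 1) := by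
    intro t ht
    rw [show q - 1 = q - 2 + 1 by ring, Real.rpow_add_one ht.1.ne']
    ring
  rw [setIntegral_congr_fun measurableSet_Ioc hsplit, ← intervalIntegral.integral_of_le hs,
    intervalIntegral.integral_sub ((intervalIntegrable_rpow' (by linarith)).const_mul s)
      (intervalIntegrable_rpow' (by linarith)),
    intervalIntegral.integral_const_mul, integral_rpow (Or.inl (by linarith)),
    integral_rpow (Or.inl (by linarith)), Real.zero_rpow (by linarith),
    Real.zero_rpow (by linarith), show q - 2 + 1 = q - 1 by ring, show q - 1 + 1 = q by ring]
  rcases hs.eq_or_lt with rfl | hs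
  · simp [Real.zero_rpow (by linarith : q ≠ 0)]
  · rw [Real.rpow_sub_one hs.ne']
    have : q - 1 ≠ 0 := by linarith
    field_simp
    ring

theorem ofReal_rpow_eq_mul_setLIntegral (s : ℝ) {q : ℝ} (hq : 1 < q) :
    ENNReal.ofReal s ^ q =
      ENNReal.ofReal (q * (q - 1)) *
        ∫⁻ t in Ioi 0, ENNReal.ofReal (s - t) * ENNReal.ofReal (t ^ (q - 2)) := by
  have hvanish : ∀ a ≥ s,
      ∫⁻ t in Ioi a, ENNReal.ofReal (s - t) * ENNReal.ofReal (t ^ (q - 2)) = 0 := by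
    intro a ha
    rw [setLIntegral_congr_fun measurableSet_Ioi (g := fun _ => 0) fun t ht => by
        rw [ENNReal.ofReal_of_nonpos (by linarith [mem_Ioi.1 ht]), zero_mul]]
    simp
  rcases le_or_gt s 0 with hs | hs
  · rw [ENNReal.ofReal_of_nonpos hs, ENNReal.zero_rpow_of_pos (by linarith), hvanish 0 hs,
      mul_zero]
  have hnonneg : ∀ t ∈ Ioc (0 : ℝ) s, 0 ≤ (s - t) * t ^ (q - 2) := fun t ht =>
    mul_nonneg (sub_nonneg.2 ht.2) (Real.rpow_nonneg ht.1.le _)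
  have hint : IntegrableOn (fun t => (s - t) * t ^ (q - 2)) (Ioc 0 s) := by
    refine (intervalIntegrable_iff_integrableOn_Ioc_of_le hs.le).1 ?_
    exact (intervalIntegrable_rpow' (by linarith)).continuousOn_mul (by fun_prop)
  rw [← Ioc_union_Ioi_eq_Ioi hs.le, lintegral_union measurableSet_Ioi (Ioc_disjoint_Ioi le_rfl),
    hvanish s le_rfl, add_zero, setLIntegral_congr_fun measurableSet_Ioc fun t ht =>
      (ENNReal.ofReal_mul (sub_nonneg.2 ht.2)).symm,
    ← ofReal_integral_eq_lintegral_ofReal hint ((ae_restrict_iff' measurableSet_Ioc).2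
      (ae_of_all _ hnonneg)), integral_sub_mul_rpow hs.le hq, ← ENNReal.ofReal_mul (by nlinarith),
    mul_div_cancel₀ _ (by nlinarith), ENNReal.ofReal_rpow_of_nonneg hs.le (by linarith)]

section

variable {α : Type*} [MeasurableSpace α] {μ : Measure α} {f g : α → ℝ}

theorem ofReal_integral_le_lintegral_ofReal (hf : Integrable f μ) :
    ENNReal.ofReal (∫ x, f x ∂μ) ≤ ∫⁻ x, ENNReal.ofReal (f x) ∂μ := by
  refine ENNReal.ofReal_le_of_le_toReal ?_
  rw [integral_eq_lintegral_pos_part_sub_lintegral_neg_part hf]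
  exact sub_le_self _ ENNReal.toReal_nonneg

theorem lintegral_ofReal_rpow_eq_mul_setLIntegral [SFinite μ] (hf : AEMeasurable f μ)
    {q : ℝ} (hq : 1 < q) :
    ∫⁻ x, ENNReal.ofReal (f x) ^ q ∂μ =
      ENNReal.ofReal (q * (q - 1)) *
        ∫⁻ t in Ioi 0, (∫⁻ x, ENNReal.ofReal (f x - t) ∂μ) * ENNReal.ofReal (t ^ (q - 2)) := by
  have hmeas : AEMeasurable (fun p : α × ℝ =>
      ENNReal.ofReal (f p.1 - p.2) * ENNReal.ofReal (p.2 ^ (q - 2)))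
      (μ.prod (volume.restrict (Ioi 0))) :=
    (hf.comp_fst.sub measurable_snd.aemeasurable).ennreal_ofReal.mul
      (measurable_snd.pow_const (q - 2)).ennreal_ofReal.aemeasurable
  simp_rw [ofReal_rpow_eq_mul_setLIntegral _ hq,
    ← lintegral_mul_const' _ _ ENNReal.ofReal_ne_top]
  rw [lintegral_const_mul' _ _ ENNReal.ofReal_ne_top, lintegral_lintegral_swap hmeas]

theorem lintegral_ofReal_le_of_forall_lintegral_ofReal_sub_le (hf : AEMeasurable f μ)
    (h : ∀ t > 0, ∫⁻ x, ENNReal.ofReal (f x - t) ∂μ ≤ ∫⁻ x, ENNReal.ofReal (g x - t) ∂μ) :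
    ∫⁻ x, ENNReal.ofReal (f x) ∂μ ≤ ∫⁻ x, ENNReal.ofReal (g x) ∂μ := by
  have hlim : Tendsto (fun n : ℕ => ∫⁻ x, ENNReal.ofReal (f x - 1 / (n + 1)) ∂μ) atTop
      (𝓝 (∫⁻ x, ENNReal.ofReal (f x) ∂μ)) := by
    refine lintegral_tendsto_of_tendsto_of_monotone
      (fun n => (hf.sub aemeasurable_const).ennreal_ofReal) (ae_of_all _ fun x m n hmn => ?_)
      (ae_of_all _ fun x => ?_)
    · exact ENNReal.ofReal_le_ofReal (sub_le_sub_left (Nat.one_div_le_one_div hmn) _)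
    · have := tendsto_one_div_add_atTop_nhds_zero_nat.const_sub (f x)
      rw [sub_zero] at this
      exact (ENNReal.continuous_ofReal.tendsto (f x)).comp this
  refine le_of_tendsto' hlim fun n => (h _ Nat.one_div_pos_of_nat).trans ?_
  exact lintegral_mono fun x =>
    ENNReal.ofReal_le_ofReal (sub_le_self _ Nat.one_div_pos_of_nat.le)

theorem eLpNormEssSup_le_of_forall_lintegral_ofReal_sub_le (hf : AEMeasurable f μ)
    (hf0 : ∀ x, 0 ≤ f x)
    (h : ∀ t > 0, ∫⁻ x, ENNReal.ofReal (f x - t) ∂μ ≤ ∫⁻ x, ENNReal.ofReal (g x - t) ∂μ) :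
    eLpNormEssSup f μ ≤ eLpNormEssSup g μ := by
  refine ENNReal.le_of_forall_pos_le_add fun ε hε hg => ?_
  set t := (eLpNormEssSup g μ).toReal + ε
  have ht : ENNReal.ofReal t = eLpNormEssSup g μ + ε := by
    rw [ENNReal.ofReal_add ENNReal.toReal_nonneg ε.coe_nonneg, ENNReal.ofReal_toReal hg.ne,
      ENNReal.ofReal_coe_nnreal]
  have hg_le : ∀ᵐ x ∂μ, ENNReal.ofReal (g x - t) = 0 := by
    filter_upwards [ae_le_eLpNormEssSup (f := g) (μ := μ)] with x hx
    have : g x ≤ (eLpNormEssSup g μ).toReal :=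
      (ENNReal.ofReal_le_iff_le_toReal hg.ne).1 ((Real.ofReal_le_enorm _).trans hx)
    exact ENNReal.ofReal_of_nonpos (by linarith [ε.coe_nonneg])
  have hf_le : ∀ᵐ x ∂μ, ENNReal.ofReal (f x - t) = 0 :=
    (lintegral_eq_zero_iff' (hf.sub aemeasurable_const).ennreal_ofReal).1 <|
      nonpos_iff_eq_zero.1 <|
        (h t (by positivity)).trans_eq (lintegral_eq_zero_of_ae_eq_zero hg_le)
  refine essSup_le_of_ae_le _ ?_
  filter_upwards [hf_le] with x hx
  rw [Real.enorm_eq_ofReal (hf0 x), ← ht]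
  exact ENNReal.ofReal_le_ofReal (sub_nonpos.1 (ENNReal.ofReal_eq_zero.1 hx))

theorem lintegral_ofReal_rpow_le_of_forall_lintegral_ofReal_sub_le [SFinite μ]
    (hf : AEMeasurable f μ) (hg : AEMeasurable g μ)
    (h : ∀ t > 0, ∫⁻ x, ENNReal.ofReal (f x - t) ∂μ ≤ ∫⁻ x, ENNReal.ofReal (g x - t) ∂μ)
    {q : ℝ} (hq : 1 < q) :
    ∫⁻ x, ENNReal.ofReal (f x) ^ q ∂μ ≤ ∫⁻ x, ENNReal.ofReal (g x) ^ q ∂μ := by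
  rw [lintegral_ofReal_rpow_eq_mul_setLIntegral hf hq,
    lintegral_ofReal_rpow_eq_mul_setLIntegral hg hq]
  gcongr _ * ?_
  exact setLIntegral_mono' measurableSet_Ioi fun t ht => mul_le_mul_left (h t ht) _

theorem eLpNorm_le_of_forall_lintegral_ofReal_sub_le [SFinite μ] (hf : AEMeasurable f μ)
    (hg : AEMeasurable g μ) (hf0 : ∀ x, 0 ≤ f x)
    (h : ∀ t > 0, ∫⁻ x, ENNReal.ofReal (f x - t) ∂μ ≤ ∫⁻ x, ENNReal.ofReal (g x - t) ∂μ)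
    {p : ℝ≥0∞} (hp : 1 ≤ p) :
    eLpNorm f p μ ≤ eLpNorm g p μ := by
  have henorm : ∀ x, ‖f x‖ₑ = ENNReal.ofReal (f x) := fun x => Real.enorm_eq_ofReal (hf0 x)
  rcases eq_or_ne p ∞ with rfl | hp_top
  · simpa only [eLpNorm_exponent_top] using
      eLpNormEssSup_le_of_forall_lintegral_ofReal_sub_le hf hf0 h
  rcases hp.eq_or_lt with rfl | hp_one
  · simp only [eLpNorm_one_eq_lintegral_enorm, henorm]
    exact (lintegral_ofReal_le_of_forall_lintegral_ofReal_sub_le hf h).trans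
      (lintegral_mono fun x => Real.ofReal_le_enorm _)
  have hq : 1 < p.toReal := by
    simpa using (ENNReal.toReal_lt_toReal ENNReal.one_ne_top hp_top).2 hp_one
  rw [eLpNorm_eq_lintegral_rpow_enorm_toReal (by positivity) hp_top,
    eLpNorm_eq_lintegral_rpow_enorm_toReal (by positivity) hp_top]
  gcongr ?_ ^ _
  simp only [henorm]
  exact (lintegral_ofReal_rpow_le_of_forall_lintegral_ofReal_sub_le hf hg h hq).trans
    (lintegral_mono fun x => ENNReal.rpow_le_rpow (Real.ofReal_le_enorm _) (by positivity))

end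

section

variable {E : Type*} [NormedAddCommGroup E]

theorem eq_univ_or_exists_ball_subset_subset_closedBall {S : Set E}
    (hS : ∀ x y : E, ‖x‖ ≤ ‖y‖ → y ∈ S → x ∈ S) :
    S = univ ∨ ∃ ρ, ball 0 ρ ⊆ S ∧ S ⊆ closedBall 0 ρ := by
  by_cases hbdd : BddAbove (norm '' S)
  · refine .inr ⟨sSup (norm '' S), fun y hy => ?_, fun x hx =>
      mem_closedBall_zero_iff.2 (le_csSup hbdd (mem_image_of_mem _ hx))⟩
    rw [mem_ball_zero_iff] at hy
    have hne : (norm '' S).Nonempty := by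
      by_contra hempty
      rw [not_nonempty_iff_eq_empty.1 hempty, Real.sSup_empty] at hy
      exact (norm_nonneg y).not_gt hy
    obtain ⟨_, ⟨x, hx, rfl⟩, hyx⟩ := exists_lt_of_lt_csSup hne hy
    exact hS y x hyx.le hx
  · refine .inl (eq_univ_of_forall fun y => ?_)
    obtain ⟨_, ⟨x, hx, rfl⟩, hyx⟩ := not_bddAbove_iff.1 hbdd ‖y‖
    exact hS y x hyx.le hx

variable [NormedSpace ℝ E] [FiniteDimensional ℝ E] [Nontrivial E] [MeasurableSpace E]
  [BorelSpace E] {μ : Measure E} [μ.IsAddHaarMeasure]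

theorem lintegral_ofReal_sub_le_of_setIntegral_ball_le {f g : E → ℝ}
    (hf : ∀ x y : E, ‖x‖ ≤ ‖y‖ → f y ≤ f x) (hfi : Integrable f μ) (hgi : Integrable g μ)
    (hconc : ∀ R > (0 : ℝ), ∫ x in ball 0 R, f x ∂μ ≤ ∫ x in ball 0 R, g x ∂μ)
    {t : ℝ} (ht : 0 < t) :
    ∫⁻ x, ENNReal.ofReal (f x - t) ∂μ ≤ ∫⁻ x, ENNReal.ofReal (g x - t) ∂μ := by
  set S : Set E := {x | t < f x}
  have hS_ne_univ : S ≠ univ := fun h => by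
    have hS_fin : μ S < ∞ := hfi.measure_gt_lt_top ht
    rw [h, measure_univ_of_isAddLeftInvariant] at hS_fin
    exact lt_irrefl _ hS_fin
  obtain ⟨ρ, hball, hclosedBall⟩ := (eq_univ_or_exists_ball_subset_subset_closedBall
    fun x y hxy hy => lt_of_lt_of_le hy (hf x y hxy)).resolve_left hS_ne_univ
  have hS_ae : S =ᵐ[μ] ball 0 ρ := by
    refine (hclosedBall.eventuallyLE.trans (ae_le_set.2 ?_)).antisymm hball.eventuallyLE
    rw [closedBall_sdiff_ball]
    exact Measure.addHaar_sphere μ 0 ρ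
  have hsupport : (fun x => ENNReal.ofReal (f x - t)).support ⊆ S := fun x hx =>
    show t < f x by simpa [sub_pos] using hx
  have hconc_ρ : ∫ x in ball 0 ρ, f x ∂μ ≤ ∫ x in ball 0 ρ, g x ∂μ := by
    rcases le_or_gt ρ 0 with hρ | hρ
    · simp [ball_eq_empty.2 hρ]
    · exact hconc ρ hρ
  have hconst : IntegrableOn (fun _ => t) (ball (0 : E) ρ) μ :=
    integrableOn_const measure_ball_lt_top.ne
  calc ∫⁻ x, ENNReal.ofReal (f x - t) ∂μ
      = ∫⁻ x in ball 0 ρ, ENNReal.ofReal (f x - t) ∂μ := by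
        rw [← setLIntegral_eq_of_support_subset hsupport, setLIntegral_congr hS_ae]
    _ = ENNReal.ofReal (∫ x in ball 0 ρ, (f x - t) ∂μ) :=
        (ofReal_integral_eq_lintegral_ofReal (hfi.integrableOn.sub hconst)
          ((ae_restrict_iff' measurableSet_ball).2
            (ae_of_all _ fun x hx => sub_nonneg.2 (le_of_lt (hball hx))))).symm
    _ ≤ ENNReal.ofReal (∫ x in ball 0 ρ, (g x - t) ∂μ) := by
        rw [integral_sub hfi.integrableOn hconst, integral_sub hgi.integrableOn hconst]
        exact ENNReal.ofReal_le_ofReal (sub_le_sub_right hconc_ρ _)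
    _ ≤ ∫⁻ x in ball 0 ρ, ENNReal.ofReal (g x - t) ∂μ :=
        ofReal_integral_le_lintegral_ofReal (hgi.integrableOn.sub hconst)
    _ ≤ ∫⁻ x, ENNReal.ofReal (g x - t) ∂μ := setLIntegral_le_lintegral _ _

end

theorem stmt2_general (N : ℕ) (hN : 1 ≤ N)
    (f g : EuclideanSpace ℝ (Fin N) → ℝ)
    (hfi : Integrable f volume) (hgi : Integrable g volume)
    (hf0 : ∀ x, 0 ≤ f x)
    (hfr : ∀ x y : EuclideanSpace ℝ (Fin N), ‖x‖ ≤ ‖y‖ → f y ≤ f x)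
    (hconc : ∀ R > (0:ℝ),
      ∫ x in ball (0 : EuclideanSpace ℝ (Fin N)) R, f x ≤
        ∫ x in ball (0 : EuclideanSpace ℝ (Fin N)) R, g x) :
    ∀ p : ℝ≥0∞, 1 ≤ p → eLpNorm f p volume ≤ eLpNorm g p volume := by
  have : Nonempty (Fin N) := ⟨⟨0, hN⟩⟩
  exact fun p hp => eLpNorm_le_of_forall_lintegral_ofReal_sub_le hfi.aemeasurable
    hgi.aemeasurable hf0
    (fun t ht => lintegral_ofReal_sub_le_of_setIntegral_ball_le hfr hfi hgi hconc ht) hp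

/-- Comparison of concentrations of rearranged integrable functions implies
comparison of all `L^p` norms, `1 ≤ p ≤ ∞`. -/
theorem stmt2 (N : ℕ) (hN : 1 ≤ N)
    (f g : EuclideanSpace ℝ (Fin N) → ℝ)
    (hfi : Integrable f volume) (hgi : Integrable g volume)
    (hf0 : ∀ x, 0 ≤ f x) (hg0 : ∀ x, 0 ≤ g x)
    (hfr : ∀ x y : EuclideanSpace ℝ (Fin N), ‖x‖ ≤ ‖y‖ → f y ≤ f x)
    (hgr : ∀ x y : EuclideanSpace ℝ (Fin N), ‖x‖ ≤ ‖y‖ → g y ≤ g x)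
    (hconc : ∀ R > (0:ℝ),
      ∫ x in ball (0 : EuclideanSpace ℝ (Fin N)) R, f x ≤
        ∫ x in ball (0 : EuclideanSpace ℝ (Fin N)) R, g x) :
    ∀ p : ℝ≥0∞, 1 ≤ p → eLpNorm f p volume ≤ eLpNorm g p volume :=
  stmt2_general N hN f g hfi hgi hf0 hfr hconc
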